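/- Let A and B be square matrices over ℕ indexed by V and W, with block matrices C = [[A,0],[0,B]] and D = [[0,R],[S,0]]. If φ: E_C × E_D → E_D × E_C and ψ: E_D² → E_C^m are path isomorphisms with components (φ_R, φ_S) and (ψ_A, ψ_B) respectively, then the single compatibility condition φ^(m) = (id_D × ψ)∘(ψ⁻¹ × id_D), where φ^(m) := (φ × id_{C^{m-1}})∘(id_C × φ × id_{C^{m-2}})∘⋯∘(id_{C^{m-1}} × φ), holds if and only if both componentwise compatibility conditions φ_R^(m) = (id_R × ψ_B)∘(ψ_A⁻¹ × id_R) and φ_S^(m) = (id_S × ψ_A)∘(ψ_B⁻¹ × id_S) hold. Hence A and B are compatibly shift equivalent with lag m via R and S if and only if there exist φ and ψ as above satisfying φ^(m) = (id_D × ψ)∘(ψ⁻¹ × id_D). -/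

import Mathlib

universe u

/-- The edge set of a matrix `F` over `ℕ`: `E_F = { (v,w,n) : n < F v w }`. -/
def Edge {α β : Type u} (F : Matrix α β ℕ) : Type u :=
  {p : α × β × ℕ // p.2.2 < F p.1 p.2.1}

/-- Source of an edge. -/
def Edge.src {α β : Type u} {F : Matrix α β ℕ} (e : Edge F) : α := e.val.1

/-- Range of an edge. -/
def Edge.rng {α β : Type u} {F : Matrix α β ℕ} (e : Edge F) : β := e.val.2.1

/-- An abstract edge system: a set of "edges" with source and range maps. -/
structure EdgeSys (α β : Type u) : Type (u + 1) where
  E : Type u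
  src : E → α
  rng : E → β

/-- The edge system of a matrix over `ℕ`. -/
def esys {α β : Type u} (F : Matrix α β ℕ) : EdgeSys α β :=
  ⟨Edge F, Edge.src, Edge.rng⟩

/-- The product of edge systems: composable pairs of edges. -/
def EdgeSys.prod {α β γ : Type u} (X : EdgeSys α β) (Y : EdgeSys β γ) : EdgeSys α γ :=
  ⟨{p : X.E × Y.E // X.rng p.1 = Y.src p.2},
   fun p => X.src p.val.1, fun p => Y.rng p.val.2⟩

/-- Powers of an edge system: paths of a given length (`pow 0` = vertices). -/
def EdgeSys.pow {α : Type u} (X : EdgeSys α α) : ℕ → EdgeSys α α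
  | 0 => ⟨α, id, id⟩
  | 1 => X
  | n + 2 => X.prod (X.pow (n + 1))

/-- A path isomorphism between edge systems: a source- and range-preserving
bijection. -/
structure PIso {α β : Type u} (X Y : EdgeSys α β) : Type u where
  e : X.E ≃ Y.E
  src_eq : ∀ x, Y.src (e x) = X.src x
  rng_eq : ∀ x, Y.rng (e x) = X.rng x

/-- Identity path isomorphism. -/
def PIso.refl {α β : Type u} (X : EdgeSys α β) : PIso X X :=
  ⟨Equiv.refl _, fun _ => rfl, fun _ => rfl⟩

/-- Inverse of a path isomorphism. -/
def PIso.symm {α β : Type u} {X Y : EdgeSys α β} (f : PIso X Y) : PIso Y X :=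
  ⟨f.e.symm,
   fun y => by rw [← f.src_eq (f.e.symm y), Equiv.apply_symm_apply],
   fun y => by rw [← f.rng_eq (f.e.symm y), Equiv.apply_symm_apply]⟩

/-- Composition of path isomorphisms. -/
def PIso.trans {α β : Type u} {X Y Z : EdgeSys α β} (f : PIso X Y) (g : PIso Y Z) :
    PIso X Z :=
  ⟨f.e.trans g.e,
   fun x => by rw [Equiv.trans_apply, g.src_eq, f.src_eq],
   fun x => by rw [Equiv.trans_apply, g.rng_eq, f.rng_eq]⟩

/-- Horizontal product `f × g` of path isomorphisms. -/
def PIso.hprod {α β γ : Type u} {X X' : EdgeSys α β} {Y Y' : EdgeSys β γ}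
    (f : PIso X X') (g : PIso Y Y') : PIso (X.prod Y) (X'.prod Y') where
  e := Equiv.subtypeEquiv (f.e.prodCongr g.e) (by
        intro p
        simp only [Equiv.prodCongr_apply, Prod.map]
        rw [f.rng_eq, g.src_eq])
  src_eq := fun x => f.src_eq x.val.1
  rng_eq := fun x => g.rng_eq x.val.2

/-- The associator path isomorphism `(X × Y) × Z ≅ X × (Y × Z)`. -/
def EdgeSys.assoc {α β γ δ : Type u} (X : EdgeSys α β) (Y : EdgeSys β γ)
    (Z : EdgeSys γ δ) : PIso ((X.prod Y).prod Z) (X.prod (Y.prod Z)) where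
  e := { toFun := fun p =>
            ⟨(p.val.1.val.1, ⟨(p.val.1.val.2, p.val.2), p.property⟩), p.val.1.property⟩
         invFun := fun q =>
            ⟨(⟨(q.val.1, q.val.2.val.1), q.property⟩, q.val.2.val.2), q.val.2.property⟩
         left_inv := fun p => rfl
         right_inv := fun q => rfl }
  src_eq := fun _ => rfl
  rng_eq := fun _ => rfl

/-- The iterated path isomorphism `φ^(m)` (with `m = k + 1`), moving an edge of
`R` past `m` edges: `φ^(m) = (φ × id) ∘ (id × φ × id) ∘ ⋯ ∘ (id × φ)`. -/
def PIso.iter {α β : Type u} {X : EdgeSys α α} {Y : EdgeSys β β} {R : EdgeSys α β}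
    (φ : PIso (X.prod R) (R.prod Y)) :
    (k : ℕ) → PIso ((X.pow (k + 1)).prod R) (R.prod (Y.pow (k + 1)))
  | 0 => φ
  | k + 1 =>
      (EdgeSys.assoc X (X.pow (k + 1)) R).trans
        (((PIso.refl X).hprod (φ.iter k)).trans
          ((EdgeSys.assoc X R (Y.pow (k + 1))).symm.trans
            ((φ.hprod (PIso.refl (Y.pow (k + 1)))).trans
              (EdgeSys.assoc R Y (Y.pow (k + 1))))))

/-- The canonical path isomorphism `X^(k+1) × X ≅ X^(k+2)`. -/
def EdgeSys.powShift {α : Type u} (X : EdgeSys α α) :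
    (k : ℕ) → PIso ((X.pow (k + 1)).prod X) (X.pow (k + 2))
  | 0 => PIso.refl (X.prod X)
  | k + 1 =>
      (EdgeSys.assoc X (X.pow (k + 1)) X).trans
        ((PIso.refl X).hprod (X.powShift k))

/-- A compatible shift equivalence of lag `k + 1` between `A` and `B`, via the
matrices `R` and `S`: path isomorphisms `φ_R, φ_S, ψ_A, ψ_B` satisfying
`φ_R^(m) = (id_R × ψ_B) ∘ (ψ_A⁻¹ × id_R)` and
`φ_S^(m) = (id_S × ψ_A) ∘ (ψ_B⁻¹ × id_S)` (with `m = k + 1`). -/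
structure CompatSE {V W : Type u} (A : Matrix V V ℕ) (B : Matrix W W ℕ)
    (R : Matrix V W ℕ) (S : Matrix W V ℕ) (k : ℕ) : Type u where
  φR : PIso ((esys A).prod (esys R)) ((esys R).prod (esys B))
  φS : PIso ((esys B).prod (esys S)) ((esys S).prod (esys A))
  ψA : PIso ((esys R).prod (esys S)) ((esys A).pow (k + 1))
  ψB : PIso ((esys S).prod (esys R)) ((esys B).pow (k + 1))
  compatR : φR.iter k =
    (ψA.symm.hprod (PIso.refl (esys R))).trans
      ((EdgeSys.assoc (esys R) (esys S) (esys R)).trans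
        ((PIso.refl (esys R)).hprod ψB))
  compatS : φS.iter k =
    (ψB.symm.hprod (PIso.refl (esys S))).trans
      ((EdgeSys.assoc (esys S) (esys R) (esys S)).trans
        ((PIso.refl (esys S)).hprod ψA))

/-- A matrix is essential if it has no zero rows and no zero columns. -/
def Essential {V W : Type u} (M : Matrix V W ℕ) : Prop :=
  (∀ v, ∃ w, M v w ≠ 0) ∧ (∀ w, ∃ v, M v w ≠ 0)

/-- A morphism of edge systems over vertex maps `f` and `g`: an edge map
intertwining sources and ranges. -/
structure PMor {α β α' β' : Type u} (X : EdgeSys α β) (Y : EdgeSys α' β')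
    (f : α → α') (g : β → β') : Type u where
  map : X.E → Y.E
  src_eq : ∀ x, Y.src (map x) = f (X.src x)
  rng_eq : ∀ x, Y.rng (map x) = g (X.rng x)

/-- Product of edge system morphisms. -/
def PMor.mprod {α β γ α' β' γ' : Type u} {X : EdgeSys α β} {Y : EdgeSys β γ}
    {X' : EdgeSys α' β'} {Y' : EdgeSys β' γ'} {f : α → α'} {g : β → β'} {h : γ → γ'}
    (F : PMor X X' f g) (G : PMor Y Y' g h) : PMor (X.prod Y) (X'.prod Y') f h where
  map p := ⟨(F.map p.val.1, G.map p.val.2), by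
    rw [F.rng_eq, G.src_eq, p.property]⟩
  src_eq p := F.src_eq p.val.1
  rng_eq p := G.rng_eq p.val.2

/-- Powers of an edge system morphism, acting on paths. -/
def PMor.mpow {α α' : Type u} {X : EdgeSys α α} {Y : EdgeSys α' α'} {f : α → α'}
    (F : PMor X Y f f) : (m : ℕ) → PMor (X.pow m) (Y.pow m) f f
  | 0 => ⟨f, fun _ => rfl, fun _ => rfl⟩
  | 1 => F
  | m + 2 => F.mprod (F.mpow (m + 1))

/-- The block matrix `C = [[A,0],[0,B]]`. -/
def Cmat {V W : Type u} (A : Matrix V V ℕ) (B : Matrix W W ℕ) :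
    Matrix (V ⊕ W) (V ⊕ W) ℕ := Matrix.fromBlocks A 0 0 B

/-- The block matrix `D = [[0,R],[S,0]]`. -/
def Dmat {V W : Type u} (R : Matrix V W ℕ) (S : Matrix W V ℕ) :
    Matrix (V ⊕ W) (V ⊕ W) ℕ := Matrix.fromBlocks 0 R S 0

/-- Embedding of the edges of `A` into the edges of `C = [[A,0],[0,B]]`. -/
def embA {V W : Type u} (A : Matrix V V ℕ) (B : Matrix W W ℕ) :
    PMor (esys A) (esys (Cmat A B)) Sum.inl Sum.inl where
  map a := ⟨(Sum.inl a.val.1, Sum.inl a.val.2.1, a.val.2.2), by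
    simpa [Cmat] using a.property⟩
  src_eq _ := rfl
  rng_eq _ := rfl

/-- Embedding of the edges of `B` into the edges of `C = [[A,0],[0,B]]`. -/
def embB {V W : Type u} (A : Matrix V V ℕ) (B : Matrix W W ℕ) :
    PMor (esys B) (esys (Cmat A B)) Sum.inr Sum.inr where
  map b := ⟨(Sum.inr b.val.1, Sum.inr b.val.2.1, b.val.2.2), by
    simpa [Cmat] using b.property⟩
  src_eq _ := rfl
  rng_eq _ := rfl

/-- Embedding of the edges of `R` into the edges of `D = [[0,R],[S,0]]`. -/
def embR {V W : Type u} (R : Matrix V W ℕ) (S : Matrix W V ℕ) :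
    PMor (esys R) (esys (Dmat R S)) Sum.inl Sum.inr where
  map r := ⟨(Sum.inl r.val.1, Sum.inr r.val.2.1, r.val.2.2), by
    simpa [Dmat] using r.property⟩
  src_eq _ := rfl
  rng_eq _ := rfl

/-- Embedding of the edges of `S` into the edges of `D = [[0,R],[S,0]]`. -/
def embS {V W : Type u} (R : Matrix V W ℕ) (S : Matrix W V ℕ) :
    PMor (esys S) (esys (Dmat R S)) Sum.inr Sum.inl where
  map s := ⟨(Sum.inr s.val.1, Sum.inl s.val.2.1, s.val.2.2), by
    simpa [Dmat] using s.property⟩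
  src_eq _ := rfl
  rng_eq _ := rfl

/-- The combined compatibility condition for block matrices: with `m = k + 1`,
`φ^(m) = (id_D × ψ) ∘ (ψ⁻¹ × id_D)`. -/
def CombinedCompat {V W : Type} (A : Matrix V V ℕ) (B : Matrix W W ℕ)
    (R : Matrix V W ℕ) (S : Matrix W V ℕ) (k : ℕ)
    (φ : PIso ((esys (Cmat A B)).prod (esys (Dmat R S)))
          ((esys (Dmat R S)).prod (esys (Cmat A B))))
    (ψ : PIso ((esys (Dmat R S)).pow 2) ((esys (Cmat A B)).pow (k + 1))) : Prop :=
  φ.iter k =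
    (ψ.symm.hprod (PIso.refl (esys (Dmat R S)))).trans
      ((EdgeSys.assoc (esys (Dmat R S)) (esys (Dmat R S)) (esys (Dmat R S))).trans
        ((PIso.refl (esys (Dmat R S))).hprod ψ))

/-! By the block structure of `C` and `D`, a path of `C`- and `D`-edges is determined by its
source in `V ⊕ W`: starting in `V` it consists of `A`-edges, or alternates `R`- and `S`-edges
beginning with `R`; starting in `W`, likewise with `B` and `S`. Since path isomorphisms preserve
sources, `φ` and `ψ` are exactly the gluings of their components. Both sides of the combined
condition are built functorially from `φ` and `ψ`, so on paths starting in `V` they restrict to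
the sides of the `R`-condition and on paths starting in `W` to those of the `S`-condition; as
these paths exhaust `E_C^m × E_D` and the embeddings are injective, the combined condition is
the conjunction of the componentwise ones. -/

theorem PIso.ext {α β : Type u} {X Y : EdgeSys α β} {p q : PIso X Y} (h : p.e = q.e) :
    p = q := by
  cases p; cases q; cases h; rfl

section Extends

variable {α β γ δ α' β' γ' δ' : Type u}

/-- `p` is a component of `p'` in the paper's sense: `p'` restricts to `p` along `F` and `G`. -/
def PIso.Extends {X Y : EdgeSys α β} {X' Y' : EdgeSys α' β'} {f : α → α'} {g : β → β'}
    (p' : PIso X' Y') (p : PIso X Y) (F : PMor X X' f g) (G : PMor Y Y' f g) : Prop :=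
  ∀ x, p'.e (F.map x) = G.map (p.e x)

variable {X Y Z : EdgeSys α β} {X' Y' Z' : EdgeSys α' β'} {f : α → α'} {g : β → β'}

theorem PIso.refl_extends (F : PMor X X' f g) : (PIso.refl X').Extends (PIso.refl X) F F :=
  fun _ => rfl

theorem PIso.Extends.symm {p : PIso X Y} {p' : PIso X' Y'} {F : PMor X X' f g}
    {G : PMor Y Y' f g} (h : p'.Extends p F G) : p'.symm.Extends p.symm G F := fun y =>
  p'.e.injective <| by
    rw [h]
    exact (p'.e.apply_symm_apply _).trans (congrArg G.map (p.e.apply_symm_apply y)).symm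

theorem PIso.Extends.trans {p : PIso X Y} {q : PIso Y Z} {p' : PIso X' Y'} {q' : PIso Y' Z'}
    {F : PMor X X' f g} {G : PMor Y Y' f g} {H : PMor Z Z' f g}
    (hp : p'.Extends p F G) (hq : q'.Extends q G H) : (p'.trans q').Extends (p.trans q) F H :=
  fun x => (congrArg q'.e (hp x)).trans (hq (p.e x))

theorem PIso.Extends.hprod {X₁ Y₁ : EdgeSys β γ} {X₁' Y₁' : EdgeSys β' γ'} {h : γ → γ'}
    {p : PIso X Y} {q : PIso X₁ Y₁} {p' : PIso X' Y'} {q' : PIso X₁' Y₁'}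
    {F : PMor X X' f g} {G : PMor Y Y' f g} {F₁ : PMor X₁ X₁' g h} {G₁ : PMor Y₁ Y₁' g h}
    (hp : p'.Extends p F G) (hq : q'.Extends q F₁ G₁) :
    (p'.hprod q').Extends (p.hprod q) (F.mprod F₁) (G.mprod G₁) :=
  fun z => Subtype.ext (Prod.ext (hp z.val.1) (hq z.val.2))

theorem EdgeSys.assoc_extends {Y : EdgeSys β γ} {Z : EdgeSys γ δ}
    {Y' : EdgeSys β' γ'} {Z' : EdgeSys γ' δ'} {h : γ → γ'} {i : δ → δ'}
    (F : PMor X X' f g) (G : PMor Y Y' g h) (H : PMor Z Z' h i) :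
    (EdgeSys.assoc X' Y' Z').Extends (EdgeSys.assoc X Y Z)
      ((F.mprod G).mprod H) (F.mprod (G.mprod H)) :=
  fun _ => rfl

theorem PIso.Extends.iter {X : EdgeSys α α} {Y : EdgeSys β β} {R : EdgeSys α β}
    {X' : EdgeSys α' α'} {Y' : EdgeSys β' β'} {R' : EdgeSys α' β'}
    {F : PMor X X' f f} {G : PMor R R' f g} {H : PMor Y Y' g g}
    {φ : PIso (X.prod R) (R.prod Y)} {φ' : PIso (X'.prod R') (R'.prod Y')}
    (h : φ'.Extends φ (F.mprod G) (G.mprod H)) :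
    ∀ k, (φ'.iter k).Extends (φ.iter k) ((F.mpow (k + 1)).mprod G) (G.mprod (H.mpow (k + 1)))
  | 0 => h
  | k + 1 =>
    (EdgeSys.assoc_extends F (F.mpow (k + 1)) G).trans
      (((PIso.refl_extends F).hprod (h.iter k)).trans
        ((EdgeSys.assoc_extends F G (H.mpow (k + 1))).symm.trans
          ((h.hprod (PIso.refl_extends (H.mpow (k + 1)))).trans
            (EdgeSys.assoc_extends G H (H.mpow (k + 1))))))

end Extends

section Exchange

variable {α β α' β' : Type u}

/-- The paper's `(id_R × ψ₂) ∘ (ψ₁⁻¹ × id_R)`. -/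
def PIso.exchange {R : EdgeSys α β} {S : EdgeSys β α} {P : EdgeSys α α} {Q : EdgeSys β β}
    (ψ₁ : PIso (R.prod S) P) (ψ₂ : PIso (S.prod R) Q) : PIso (P.prod R) (R.prod Q) :=
  (ψ₁.symm.hprod (PIso.refl R)).trans
    ((EdgeSys.assoc R S R).trans ((PIso.refl R).hprod ψ₂))

variable {R : EdgeSys α β} {S : EdgeSys β α} {P : EdgeSys α α} {Q : EdgeSys β β}
  {R' : EdgeSys α' β'} {S' : EdgeSys β' α'} {P' : EdgeSys α' α'} {Q' : EdgeSys β' β'}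
  {f : α → α'} {g : β → β'}
  {FR : PMor R R' f g} {FS : PMor S S' g f} {FP : PMor P P' f f} {FQ : PMor Q Q' g g}

theorem PIso.Extends.exchange {ψ₁ : PIso (R.prod S) P} {ψ₂ : PIso (S.prod R) Q}
    {ψ₁' : PIso (R'.prod S') P'} {ψ₂' : PIso (S'.prod R') Q'}
    (h₁ : ψ₁'.Extends ψ₁ (FR.mprod FS) FP) (h₂ : ψ₂'.Extends ψ₂ (FS.mprod FR) FQ) :
    (ψ₁'.exchange ψ₂').Extends (ψ₁.exchange ψ₂) (FP.mprod FR) (FR.mprod FQ) :=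
  (h₁.symm.hprod (PIso.refl_extends FR)).trans
    ((EdgeSys.assoc_extends FR FS FR).trans ((PIso.refl_extends FR).hprod h₂))

theorem PIso.iter_eq_exchange_iff_of_extends {k : ℕ}
    {X : EdgeSys α α} {Y : EdgeSys β β} {X' : EdgeSys α' α'} {Y' : EdgeSys β' β'}
    {FX : PMor X X' f f} {FY : PMor Y Y' g g}
    {φ : PIso (X.prod R) (R.prod Y)} {ψ₁ : PIso (R.prod S) (X.pow (k + 1))}
    {ψ₂ : PIso (S.prod R) (Y.pow (k + 1))}
    {φ' : PIso (X'.prod R') (R'.prod Y')} {ψ₁' : PIso (R'.prod S') (X'.pow (k + 1))}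
    {ψ₂' : PIso (S'.prod R') (Y'.pow (k + 1))}
    (hφ : φ'.Extends φ (FX.mprod FR) (FR.mprod FY))
    (hψ₁ : ψ₁'.Extends ψ₁ (FR.mprod FS) (FX.mpow (k + 1)))
    (hψ₂ : ψ₂'.Extends ψ₂ (FS.mprod FR) (FY.mpow (k + 1)))
    (hinj : Function.Injective (FR.mprod (FY.mpow (k + 1))).map) :
    φ.iter k = ψ₁.exchange ψ₂ ↔
      ∀ x, (φ'.iter k).e (((FX.mpow (k + 1)).mprod FR).map x) =
        (ψ₁'.exchange ψ₂').e (((FX.mpow (k + 1)).mprod FR).map x) := by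
  constructor
  · intro h x
    rw [hφ.iter k x, h, (hψ₁.exchange hψ₂) x]
  · intro h
    exact PIso.ext <| Equiv.ext fun x => hinj <| by
      rw [← hφ.iter k x, h x, (hψ₁.exchange hψ₂) x]

end Exchange

section SrcFull

variable {α β γ α' β' γ' : Type u}

/-- `F` identifies `X` with the edges of `Y` whose source lies over the image of `f`. -/
structure PMor.IsSrcFull {X : EdgeSys α β} {Y : EdgeSys α' β'} {f : α → α'} {g : β → β'}
    (F : PMor X Y f g) : Prop where
  injective : Function.Injective F.map
  saturated : ∀ y, Y.src y ∈ Set.range f → y ∈ Set.range F.map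

variable {X : EdgeSys α β} {Y : EdgeSys β γ} {X' : EdgeSys α' β'} {Y' : EdgeSys β' γ'}
  {f : α → α'} {g : β → β'} {h : γ → γ'}

theorem PMor.IsSrcFull.mprod {F : PMor X X' f g} {G : PMor Y Y' g h}
    (hF : F.IsSrcFull) (hg : Function.Injective g) (hG : G.IsSrcFull) :
    (F.mprod G).IsSrcFull := by
  refine ⟨fun a b hab => ?_, ?_⟩
  · have hab' := congrArg Subtype.val hab
    exact Subtype.ext
      (Prod.ext (hF.injective (congrArg Prod.fst hab')) (hG.injective (congrArg Prod.snd hab')))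
  · rintro ⟨⟨x', y'⟩, hxy⟩ hsrc
    obtain ⟨x, rfl⟩ := hF.saturated x' hsrc
    obtain ⟨y, rfl⟩ := hG.saturated y' ⟨X.rng x, by rw [← hxy, F.rng_eq]⟩
    have hcomp : X.rng x = Y.src y := hg (by rw [← F.rng_eq, ← G.src_eq]; exact hxy)
    exact ⟨⟨(x, y), hcomp⟩, rfl⟩

theorem PMor.IsSrcFull.mpow {X : EdgeSys α α} {X' : EdgeSys α' α'} {f : α → α'}
    {F : PMor X X' f f} (hF : F.IsSrcFull) (hf : Function.Injective f) :
    ∀ m, (F.mpow m).IsSrcFull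
  | 0 => ⟨hf, fun _ h => h⟩
  | 1 => hF
  | m + 2 => hF.mprod hf (hF.mpow hf (m + 1))

end SrcFull

section Split

variable {α β γ γ₁ γ₂ : Type u} {X : EdgeSys (α ⊕ β) γ} {X₁ : EdgeSys α γ₁}
  {X₂ : EdgeSys β γ₂} {g₁ : γ₁ → γ} {g₂ : γ₂ → γ}
  {F₁ : PMor X₁ X Sum.inl g₁} {F₂ : PMor X₂ X Sum.inr g₂}

theorem PMor.mem_range_or_mem_range (hF₁ : F₁.IsSrcFull) (hF₂ : F₂.IsSrcFull) (x : X.E) :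
    x ∈ Set.range F₁.map ∨ x ∈ Set.range F₂.map := by
  rcases hx : X.src x with a | b
  · exact Or.inl (hF₁.saturated x ⟨a, hx.symm⟩)
  · exact Or.inr (hF₂.saturated x ⟨b, hx.symm⟩)

theorem PMor.sumElim_map_bijective (hF₁ : F₁.IsSrcFull) (hF₂ : F₂.IsSrcFull) :
    Function.Bijective (Sum.elim F₁.map F₂.map) := by
  refine ⟨hF₁.injective.sumElim hF₂.injective fun a b hab => ?_, fun x => ?_⟩
  · have hsrc := congrArg X.src hab
    rw [F₁.src_eq, F₂.src_eq] at hsrc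
    exact Sum.inl_ne_inr hsrc
  · rcases PMor.mem_range_or_mem_range hF₁ hF₂ x with ⟨a, rfl⟩ | ⟨b, rfl⟩
    exacts [⟨Sum.inl a, rfl⟩, ⟨Sum.inr b, rfl⟩]

end Split

section Glue

variable {α β α₁ β₁ α₂ β₂ : Type u} {X Y : EdgeSys α β} {X₁ Y₁ : EdgeSys α₁ β₁}
  {X₂ Y₂ : EdgeSys α₂ β₂} {f₁ : α₁ → α} {g₁ : β₁ → β} {f₂ : α₂ → α} {g₂ : β₂ → β}

theorem PIso.exists_glue {F₁ : PMor X₁ X f₁ g₁} {F₂ : PMor X₂ X f₂ g₂}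
    {G₁ : PMor Y₁ Y f₁ g₁} {G₂ : PMor Y₂ Y f₂ g₂}
    (hF : Function.Bijective (Sum.elim F₁.map F₂.map))
    (hG : Function.Bijective (Sum.elim G₁.map G₂.map)) (p₁ : PIso X₁ Y₁) (p₂ : PIso X₂ Y₂) :
    ∃ p : PIso X Y, p.Extends p₁ F₁ G₁ ∧ p.Extends p₂ F₂ G₂ := by
  let e := (Equiv.ofBijective _ hF).symm.trans
    ((Equiv.sumCongr p₁.e p₂.e).trans (Equiv.ofBijective _ hG))
  have he₁ : ∀ x, e (F₁.map x) = G₁.map (p₁.e x) := fun x =>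
    congrArg (Equiv.ofBijective _ hG ∘ Equiv.sumCongr p₁.e p₂.e)
      (Equiv.ofBijective_symm_apply_apply _ hF (Sum.inl x))
  have he₂ : ∀ x, e (F₂.map x) = G₂.map (p₂.e x) := fun x =>
    congrArg (Equiv.ofBijective _ hG ∘ Equiv.sumCongr p₁.e p₂.e)
      (Equiv.ofBijective_symm_apply_apply _ hF (Sum.inr x))
  have hcover : ∀ z, z ∈ Set.range F₁.map ∨ z ∈ Set.range F₂.map := fun z => by
    obtain ⟨w | w, rfl⟩ := hF.2 z
    exacts [Or.inl ⟨w, rfl⟩, Or.inr ⟨w, rfl⟩]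
  refine ⟨⟨e, fun z => ?_, fun z => ?_⟩, he₁, he₂⟩ <;>
    rcases hcover z with ⟨x, rfl⟩ | ⟨x, rfl⟩
  · rw [he₁, G₁.src_eq, p₁.src_eq, F₁.src_eq]
  · rw [he₂, G₂.src_eq, p₂.src_eq, F₂.src_eq]
  · rw [he₁, G₁.rng_eq, p₁.rng_eq, F₁.rng_eq]
  · rw [he₂, G₂.rng_eq, p₂.rng_eq, F₂.rng_eq]

end Glue

section Restrict

variable {α β α₁ β₁ : Type u} {X Y : EdgeSys α β} {X₁ Y₁ : EdgeSys α₁ β₁}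
  {f : α₁ → α} {g : β₁ → β}

theorem PIso.exists_restrict (p : PIso X Y) {F : PMor X₁ X f g} {G : PMor Y₁ Y f g}
    (hf : Function.Injective f) (hg : Function.Injective g)
    (hF : F.IsSrcFull) (hG : G.IsSrcFull) :
    ∃ p₁ : PIso X₁ Y₁, p.Extends p₁ F G := by
  have hex : ∀ x, ∃ y, G.map y = p.e (F.map x) := fun x =>
    hG.saturated _ ⟨X₁.src x, by rw [p.src_eq, F.src_eq]⟩
  choose e he using hex
  have hbij : Function.Bijective e := by
    refine ⟨fun x x' hxx' => hF.injective (p.e.injective ?_), fun y => ?_⟩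
    · rw [← he, ← he, hxx']
    · have hsrc : X.src (p.e.symm (G.map y)) = f (Y₁.src y) := by
        rw [← p.src_eq, Equiv.apply_symm_apply, G.src_eq]
      obtain ⟨x, hx⟩ := hF.saturated _ ⟨Y₁.src y, hsrc.symm⟩
      exact ⟨x, hG.injective (by rw [he, hx, Equiv.apply_symm_apply])⟩
  refine ⟨⟨Equiv.ofBijective e hbij, fun x => hf ?_, fun x => hg ?_⟩, fun x => (he x).symm⟩
  · rw [← G.src_eq, Equiv.ofBijective_apply, he, p.src_eq, F.src_eq]
  · rw [← G.rng_eq, Equiv.ofBijective_apply, he, p.rng_eq, F.rng_eq]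

end Restrict

section BlockMatrices

variable {V W : Type u} (A : Matrix V V ℕ) (B : Matrix W W ℕ) (R : Matrix V W ℕ)
  (S : Matrix W V ℕ)

theorem embA_isSrcFull : (embA A B).IsSrcFull := by
  refine ⟨?_, ?_⟩
  · rintro ⟨⟨_, _, _⟩, _⟩ ⟨⟨_, _, _⟩, _⟩ hab
    simp only [embA] at hab
    obtain ⟨rfl, rfl, rfl⟩ := hab
    rfl
  · rintro ⟨⟨x, y, n⟩, h⟩ ⟨v, hv⟩
    change Sum.inl v = x at hv
    subst hv
    rcases y with w | w
    · exact ⟨⟨(v, w, n), h⟩, rfl⟩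
    · simp [Cmat] at h

theorem embB_isSrcFull : (embB A B).IsSrcFull := by
  refine ⟨?_, ?_⟩
  · rintro ⟨⟨_, _, _⟩, _⟩ ⟨⟨_, _, _⟩, _⟩ hab
    simp only [embB] at hab
    obtain ⟨rfl, rfl, rfl⟩ := hab
    rfl
  · rintro ⟨⟨x, y, n⟩, h⟩ ⟨w, hw⟩
    change Sum.inr w = x at hw
    subst hw
    rcases y with v | v
    · simp [Cmat] at h
    · exact ⟨⟨(w, v, n), h⟩, rfl⟩

theorem embR_isSrcFull : (embR R S).IsSrcFull := by
  refine ⟨?_, ?_⟩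
  · rintro ⟨⟨_, _, _⟩, _⟩ ⟨⟨_, _, _⟩, _⟩ hab
    simp only [embR] at hab
    obtain ⟨rfl, rfl, rfl⟩ := hab
    rfl
  · rintro ⟨⟨x, y, n⟩, h⟩ ⟨v, hv⟩
    change Sum.inl v = x at hv
    subst hv
    rcases y with v' | w
    · simp [Dmat] at h
    · exact ⟨⟨(v, w, n), h⟩, rfl⟩

theorem embS_isSrcFull : (embS R S).IsSrcFull := by
  refine ⟨?_, ?_⟩
  · rintro ⟨⟨_, _, _⟩, _⟩ ⟨⟨_, _, _⟩, _⟩ hab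
    simp only [embS] at hab
    obtain ⟨rfl, rfl, rfl⟩ := hab
    rfl
  · rintro ⟨⟨x, y, n⟩, h⟩ ⟨w, hw⟩
    change Sum.inr w = x at hw
    subst hw
    rcases y with v | w'
    · exact ⟨⟨(w, v, n), h⟩, rfl⟩
    · simp [Dmat] at h

theorem embA_mpow_mprod_embR_isSrcFull (m : ℕ) :
    ((embA A B).mpow m).mprod (embR R S) |>.IsSrcFull :=
  ((embA_isSrcFull A B).mpow Sum.inl_injective m).mprod Sum.inl_injective (embR_isSrcFull R S)

theorem embB_mpow_mprod_embS_isSrcFull (m : ℕ) :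
    ((embB A B).mpow m).mprod (embS R S) |>.IsSrcFull :=
  ((embB_isSrcFull A B).mpow Sum.inr_injective m).mprod Sum.inr_injective (embS_isSrcFull R S)

theorem embR_mprod_embB_mpow_isSrcFull (m : ℕ) :
    (embR R S).mprod ((embB A B).mpow m) |>.IsSrcFull :=
  (embR_isSrcFull R S).mprod Sum.inr_injective ((embB_isSrcFull A B).mpow Sum.inr_injective m)

theorem embS_mprod_embA_mpow_isSrcFull (m : ℕ) :
    (embS R S).mprod ((embA A B).mpow m) |>.IsSrcFull :=
  (embS_isSrcFull R S).mprod Sum.inl_injective ((embA_isSrcFull A B).mpow Sum.inl_injective m)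

theorem exists_φ_of_φR_φS
    (φR : PIso ((esys A).prod (esys R)) ((esys R).prod (esys B)))
    (φS : PIso ((esys B).prod (esys S)) ((esys S).prod (esys A))) :
    ∃ φ : PIso ((esys (Cmat A B)).prod (esys (Dmat R S)))
        ((esys (Dmat R S)).prod (esys (Cmat A B))),
      φ.Extends φR ((embA A B).mprod (embR R S)) ((embR R S).mprod (embB A B)) ∧
      φ.Extends φS ((embB A B).mprod (embS R S)) ((embS R S).mprod (embA A B)) :=
  PIso.exists_glue
    (PMor.sumElim_map_bijective (embA_mpow_mprod_embR_isSrcFull A B R S 1)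
      (embB_mpow_mprod_embS_isSrcFull A B R S 1))
    (PMor.sumElim_map_bijective (embR_mprod_embB_mpow_isSrcFull A B R S 1)
      (embS_mprod_embA_mpow_isSrcFull A B R S 1)) φR φS

theorem exists_φR_φS_of_φ
    (φ : PIso ((esys (Cmat A B)).prod (esys (Dmat R S)))
      ((esys (Dmat R S)).prod (esys (Cmat A B)))) :
    ∃ (φR : PIso ((esys A).prod (esys R)) ((esys R).prod (esys B)))
      (φS : PIso ((esys B).prod (esys S)) ((esys S).prod (esys A))),
      φ.Extends φR ((embA A B).mprod (embR R S)) ((embR R S).mprod (embB A B)) ∧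
      φ.Extends φS ((embB A B).mprod (embS R S)) ((embS R S).mprod (embA A B)) := by
  obtain ⟨φR, hφR⟩ := φ.exists_restrict Sum.inl_injective Sum.inr_injective
    (embA_mpow_mprod_embR_isSrcFull A B R S 1) (embR_mprod_embB_mpow_isSrcFull A B R S 1)
  obtain ⟨φS, hφS⟩ := φ.exists_restrict Sum.inr_injective Sum.inl_injective
    (embB_mpow_mprod_embS_isSrcFull A B R S 1) (embS_mprod_embA_mpow_isSrcFull A B R S 1)
  exact ⟨φR, φS, hφR, hφS⟩

variable {k : ℕ}

theorem exists_ψ_of_ψA_ψB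
    (ψA : PIso ((esys R).prod (esys S)) ((esys A).pow (k + 1)))
    (ψB : PIso ((esys S).prod (esys R)) ((esys B).pow (k + 1))) :
    ∃ ψ : PIso ((esys (Dmat R S)).pow 2) ((esys (Cmat A B)).pow (k + 1)),
      ψ.Extends ψA ((embR R S).mprod (embS R S)) ((embA A B).mpow (k + 1)) ∧
      ψ.Extends ψB ((embS R S).mprod (embR R S)) ((embB A B).mpow (k + 1)) :=
  PIso.exists_glue
    (PMor.sumElim_map_bijective
      ((embR_isSrcFull R S).mprod Sum.inr_injective (embS_isSrcFull R S))
      ((embS_isSrcFull R S).mprod Sum.inl_injective (embR_isSrcFull R S)))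
    (PMor.sumElim_map_bijective ((embA_isSrcFull A B).mpow Sum.inl_injective (k + 1))
      ((embB_isSrcFull A B).mpow Sum.inr_injective (k + 1))) ψA ψB

theorem exists_ψA_ψB_of_ψ
    (ψ : PIso ((esys (Dmat R S)).pow 2) ((esys (Cmat A B)).pow (k + 1))) :
    ∃ (ψA : PIso ((esys R).prod (esys S)) ((esys A).pow (k + 1)))
      (ψB : PIso ((esys S).prod (esys R)) ((esys B).pow (k + 1))),
      ψ.Extends ψA ((embR R S).mprod (embS R S)) ((embA A B).mpow (k + 1)) ∧
      ψ.Extends ψB ((embS R S).mprod (embR R S)) ((embB A B).mpow (k + 1)) := by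
  obtain ⟨ψA, hψA⟩ := ψ.exists_restrict Sum.inl_injective Sum.inl_injective
    ((embR_isSrcFull R S).mprod Sum.inr_injective (embS_isSrcFull R S))
    ((embA_isSrcFull A B).mpow Sum.inl_injective (k + 1))
  obtain ⟨ψB, hψB⟩ := ψ.exists_restrict Sum.inr_injective Sum.inr_injective
    ((embS_isSrcFull R S).mprod Sum.inl_injective (embR_isSrcFull R S))
    ((embB_isSrcFull A B).mpow Sum.inr_injective (k + 1))
  exact ⟨ψA, ψB, hψA, hψB⟩

end BlockMatrices

theorem combinedCompat_iff_of_extends {V W : Type} {A : Matrix V V ℕ} {B : Matrix W W ℕ}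
    {R : Matrix V W ℕ} {S : Matrix W V ℕ} {k : ℕ}
    {φ : PIso ((esys (Cmat A B)).prod (esys (Dmat R S)))
      ((esys (Dmat R S)).prod (esys (Cmat A B)))}
    {ψ : PIso ((esys (Dmat R S)).pow 2) ((esys (Cmat A B)).pow (k + 1))}
    {φR : PIso ((esys A).prod (esys R)) ((esys R).prod (esys B))}
    {φS : PIso ((esys B).prod (esys S)) ((esys S).prod (esys A))}
    {ψA : PIso ((esys R).prod (esys S)) ((esys A).pow (k + 1))}
    {ψB : PIso ((esys S).prod (esys R)) ((esys B).pow (k + 1))}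
    (hφR : φ.Extends φR ((embA A B).mprod (embR R S)) ((embR R S).mprod (embB A B)))
    (hφS : φ.Extends φS ((embB A B).mprod (embS R S)) ((embS R S).mprod (embA A B)))
    (hψA : ψ.Extends ψA ((embR R S).mprod (embS R S)) ((embA A B).mpow (k + 1)))
    (hψB : ψ.Extends ψB ((embS R S).mprod (embR R S)) ((embB A B).mpow (k + 1))) :
    CombinedCompat A B R S k φ ψ ↔ φR.iter k = ψA.exchange ψB ∧ φS.iter k = ψB.exchange ψA := by
  rw [PIso.iter_eq_exchange_iff_of_extends hφR hψA hψB
      (embR_mprod_embB_mpow_isSrcFull A B R S (k + 1)).injective,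
    PIso.iter_eq_exchange_iff_of_extends hφS hψB hψA
      (embS_mprod_embA_mpow_isSrcFull A B R S (k + 1)).injective]
  change φ.iter k = ψ.exchange ψ ↔ _
  refine ⟨fun h => ⟨fun x => by rw [h], fun x => by rw [h]⟩, fun ⟨hA, hB⟩ => ?_⟩
  refine PIso.ext (Equiv.ext fun z => ?_)
  rcases PMor.mem_range_or_mem_range (embA_mpow_mprod_embR_isSrcFull A B R S (k + 1))
    (embB_mpow_mprod_embS_isSrcFull A B R S (k + 1)) z with ⟨x, rfl⟩ | ⟨x, rfl⟩
  exacts [hA x, hB x]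

/-- if `φ : E_C × E_D → E_D × E_C` has components `(φ_R, φ_S)`
and `ψ : E_D² → E_C^m` has components `(ψ_A, ψ_B)` (with `m = k + 1`), then the
single compatibility condition `φ^(m) = (id_D × ψ) ∘ (ψ⁻¹ × id_D)` holds if and
only if both componentwise compatibility conditions hold.  Hence `A` and `B`
are compatibly shift equivalent with lag `m` via `R` and `S` if and only if
there exist `φ` and `ψ` satisfying the combined condition. -/
theorem combined_compatibility_iff {V W : Type}
    (A : Matrix V V ℕ) (B : Matrix W W ℕ)
    (R : Matrix V W ℕ) (S : Matrix W V ℕ) (k : ℕ) :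
    (∀ (φ : PIso ((esys (Cmat A B)).prod (esys (Dmat R S)))
              ((esys (Dmat R S)).prod (esys (Cmat A B))))
       (ψ : PIso ((esys (Dmat R S)).pow 2) ((esys (Cmat A B)).pow (k + 1)))
       (φR : PIso ((esys A).prod (esys R)) ((esys R).prod (esys B)))
       (φS : PIso ((esys B).prod (esys S)) ((esys S).prod (esys A)))
       (ψA : PIso ((esys R).prod (esys S)) ((esys A).pow (k + 1)))
       (ψB : PIso ((esys S).prod (esys R)) ((esys B).pow (k + 1))),
      (∀ x, φ.e (((embA A B).mprod (embR R S)).map x) =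
            ((embR R S).mprod (embB A B)).map (φR.e x)) →
      (∀ x, φ.e (((embB A B).mprod (embS R S)).map x) =
            ((embS R S).mprod (embA A B)).map (φS.e x)) →
      (∀ x, ψ.e (((embR R S).mprod (embS R S)).map x) =
            ((embA A B).mpow (k + 1)).map (ψA.e x)) →
      (∀ x, ψ.e (((embS R S).mprod (embR R S)).map x) =
            ((embB A B).mpow (k + 1)).map (ψB.e x)) →
      (CombinedCompat A B R S k φ ψ ↔
        (φR.iter k =
          (ψA.symm.hprod (PIso.refl (esys R))).trans
            ((EdgeSys.assoc (esys R) (esys S) (esys R)).trans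
              ((PIso.refl (esys R)).hprod ψB)) ∧
         φS.iter k =
          (ψB.symm.hprod (PIso.refl (esys S))).trans
            ((EdgeSys.assoc (esys S) (esys R) (esys S)).trans
              ((PIso.refl (esys S)).hprod ψA))))) ∧
    (Nonempty (CompatSE A B R S k) ↔
      ∃ (φ : PIso ((esys (Cmat A B)).prod (esys (Dmat R S)))
               ((esys (Dmat R S)).prod (esys (Cmat A B))))
        (ψ : PIso ((esys (Dmat R S)).pow 2) ((esys (Cmat A B)).pow (k + 1))),
        CombinedCompat A B R S k φ ψ) := by
  refine ⟨fun φ ψ φR φS ψA ψB hφR hφS hψA hψB =>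
    combinedCompat_iff_of_extends hφR hφS hψA hψB, ⟨?_, ?_⟩⟩
  · rintro ⟨c⟩
    obtain ⟨φ, hφR, hφS⟩ := exists_φ_of_φR_φS A B R S c.φR c.φS
    obtain ⟨ψ, hψA, hψB⟩ := exists_ψ_of_ψA_ψB A B R S c.ψA c.ψB
    exact ⟨φ, ψ, (combinedCompat_iff_of_extends hφR hφS hψA hψB).2 ⟨c.compatR, c.compatS⟩⟩
  · rintro ⟨φ, ψ, h⟩
    obtain ⟨φR, φS, hφR, hφS⟩ := exists_φR_φS_of_φ A B R S φ
    obtain ⟨ψA, ψB, hψA, hψB⟩ := exists_ψA_ψB_of_ψ A B R S ψ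
    obtain ⟨hR, hS⟩ := (combinedCompat_iff_of_extends hφR hφS hψA hψB).1 h
    exact ⟨⟨φR, φS, ψA, ψB, hR, hS⟩⟩
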